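/- arXiv:0910.1879 — 4 statements merged into one kernel-verified Lean document; each statement's English description precedes it below -/
import Mathlib

section
/- If {w_a} is an orthonormal basis (with respect to the Hilbert–Schmidt inner product) of the Hermitian n×n matrices satisfying max_a ‖w_a‖² ≤ ν/n, and T is the tangent space at a rank-r Hermitian matrix ρ (matrices σ with (𝟙−P_U)σ(𝟙−P_U) = 0, where P_U projects onto the range of ρ), then max_a ‖𝒫_T w_a‖₂² ≤ 2νr/n, where 𝒫_T is the orthogonal projection onto T and ‖·‖₂ is the Frobenius norm. -/
open Matrix

noncomputable def opNorm {m : Type*} [Fintype m] [DecidableEq m] (A : Matrix m m ℂ) : ℝ :=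
  ‖Matrix.toEuclideanCLM (𝕜 := ℂ) (n := m) A‖

noncomputable def frobNorm {m : Type*} [Fintype m] (A : Matrix m m ℂ) : ℝ :=
  Real.sqrt (∑ i, ∑ j, ‖A i j‖ ^ 2)

/-- The orthogonal projection onto the range of a Hermitian matrix. -/
noncomputable def rangeProj {m : Type*} [Fintype m] [DecidableEq m] (A : Matrix m m ℂ) :
    Matrix m m ℂ :=
  if hA : A.IsHermitian then
    (hA.eigenvectorUnitary : Matrix m m ℂ) *
      Matrix.diagonal (fun i => if hA.eigenvalues i = 0 then (0 : ℂ) else 1) *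
      star (hA.eigenvectorUnitary : Matrix m m ℂ)
  else 0

/-- The orthogonal projection onto the tangent space `T` at `ρ`:
`𝒫_T σ = P_U σ + σ P_U − P_U σ P_U` with `P_U` the projection onto the range of `ρ`. -/
noncomputable def projT {m : Type*} [Fintype m] [DecidableEq m] (ρ σ : Matrix m m ℂ) :
    Matrix m m ℂ :=
  rangeProj ρ * σ + σ * rangeProj ρ - rangeProj ρ * σ * rangeProj ρ

/-!
In an eigenbasis of `ρ`, the projection `P_U` becomes the diagonal indicator of the set `S` of
indices of nonzero eigenvalues, `|S| = r`, and `𝒫_T` keeps exactly the entries `(i, j)` with `i ∈ S`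
or `j ∈ S`. So `‖𝒫_T w‖₂²` is at most the total squared mass of the `r` rows and `r` columns
indexed by `S`, and every row and column of a matrix has squared length at most its squared
operator norm. Both norms are invariant under the unitary change of basis.
-/

open scoped Matrix.Norms.L2Operator
open Unitary

lemma norm_conjStarAlgAut {S A : Type*} [NormedRing A] [StarRing A] [CStarRing A] [SMul S A]
    [IsScalarTower S A A] [SMulCommClass S A A] (u : unitary A) (x : A) :
    ‖conjStarAlgAut S A u x‖ = ‖x‖ := by
  rw [conjStarAlgAut_apply, ← Unitary.coe_star, CStarRing.norm_mul_coe_unitary,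
    CStarRing.norm_coe_unitary_mul]

section
variable {m : Type*} [Fintype m]

lemma frobNorm_sq (A : Matrix m m ℂ) : frobNorm A ^ 2 = ∑ i, ∑ j, ‖A i j‖ ^ 2 :=
  Real.sq_sqrt (by positivity)

lemma ofReal_frobNorm_sq (A : Matrix m m ℂ) : ((frobNorm A ^ 2 : ℝ) : ℂ) = trace (Aᴴ * A) := by
  rw [frobNorm_sq, trace, Finset.sum_comm]
  push_cast
  refine Finset.sum_congr rfl fun j _ => ?_
  rw [diag_apply, mul_apply]
  refine Finset.sum_congr rfl fun i _ => ?_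
  rw [conjTranspose_apply, RCLike.star_def, ← Complex.normSq_eq_conj_mul_self, ← Complex.sq_norm,
    Complex.ofReal_pow]

variable [DecidableEq m]

lemma frobNorm_conjStarAlgAut (U : unitary (Matrix m m ℂ)) (A : Matrix m m ℂ) :
    frobNorm (conjStarAlgAut ℂ _ U A) = frobNorm A := by
  have hU : star (U : Matrix m m ℂ) * U = 1 := Unitary.star_mul_self_of_mem U.2
  have h : ((frobNorm (conjStarAlgAut ℂ _ U A) ^ 2 : ℝ) : ℂ) = ((frobNorm A ^ 2 : ℝ) : ℂ) := by
    rw [ofReal_frobNorm_sq, ofReal_frobNorm_sq, conjStarAlgAut_apply, ← star_eq_conjTranspose,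
      ← star_eq_conjTranspose]
    simp only [star_mul, star_star, mul_assoc]
    rw [← mul_assoc (star (U : Matrix m m ℂ)) U, hU, one_mul, trace_mul_comm, mul_assoc,
      mul_assoc, hU, mul_one]
  exact (pow_left_inj₀ (Real.sqrt_nonneg _) (Real.sqrt_nonneg _) two_ne_zero).mp
    (by exact_mod_cast h)

lemma sum_norm_sq_col_le (A : Matrix m m ℂ) (j : m) : ∑ i, ‖A i j‖ ^ 2 ≤ ‖A‖ ^ 2 := by
  have h := A.l2_opNorm_mulVec (EuclideanSpace.single j 1)
  rw [EuclideanSpace.single, PiLp.norm_single, norm_one, mul_one] at h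
  simpa [EuclideanSpace.norm_sq_eq, mulVec_single_one] using
    pow_le_pow_left₀ (norm_nonneg _) h 2

lemma sum_norm_sq_row_le (A : Matrix m m ℂ) (i : m) : ∑ j, ‖A i j‖ ^ 2 ≤ ‖A‖ ^ 2 := by
  simpa [l2_opNorm_conjTranspose] using sum_norm_sq_col_le Aᴴ i

def tangentProj (P X : Matrix m m ℂ) : Matrix m m ℂ := P * X + X * P - P * X * P

lemma map_tangentProj {F : Type*} [FunLike F (Matrix m m ℂ) (Matrix m m ℂ)]
    [RingHomClass F (Matrix m m ℂ) (Matrix m m ℂ)] (f : F) (P X : Matrix m m ℂ) :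
    f (tangentProj P X) = tangentProj (f P) (f X) := by
  simp only [tangentProj, map_sub, map_add, map_mul]

lemma tangentProj_diagonal_apply (p : m → Prop) [DecidablePred p] (V : Matrix m m ℂ) (i j : m) :
    tangentProj (diagonal fun k => if p k then 1 else 0) V i j =
      if p i ∨ p j then V i j else 0 := by
  by_cases hi : p i <;> by_cases hj : p j <;> simp [tangentProj, hi, hj]

lemma frobNorm_sq_tangentProj_diagonal_le (p : m → Prop) [DecidablePred p] (V : Matrix m m ℂ) :
    frobNorm (tangentProj (diagonal fun k => if p k then 1 else 0) V) ^ 2 ≤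
      2 * Fintype.card {i // p i} * ‖V‖ ^ 2 := by
  simp only [frobNorm_sq, tangentProj_diagonal_apply]
  calc ∑ i, ∑ j, ‖if p i ∨ p j then V i j else 0‖ ^ 2
      ≤ ∑ i, ∑ j, ((if p i then ‖V i j‖ ^ 2 else 0) + if p j then ‖V i j‖ ^ 2 else 0) := by
        gcongr with i _ j _
        by_cases hi : p i <;> by_cases hj : p j <;> simp [hi, hj]
    _ = ∑ i with p i, ∑ j, ‖V i j‖ ^ 2 + ∑ j with p j, ∑ i, ‖V i j‖ ^ 2 := by
        simp only [Finset.sum_add_distrib]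
        congr 1
        · simp only [Finset.sum_filter, Finset.sum_ite_irrel, Finset.sum_const_zero]
        · rw [Finset.sum_comm]
          simp only [Finset.sum_filter, Finset.sum_ite_irrel, Finset.sum_const_zero]
    _ ≤ ∑ i with p i, ‖V‖ ^ 2 + ∑ j with p j, ‖V‖ ^ 2 := by
        gcongr with i _ j _
        exacts [sum_norm_sq_row_le V i, sum_norm_sq_col_le V j]
    _ = 2 * Fintype.card {i // p i} * ‖V‖ ^ 2 := by
        simp only [Finset.sum_const, nsmul_eq_mul, Fintype.card_subtype]
        ring

lemma projT_eq_conjStarAlgAut {ρ : Matrix m m ℂ} (hρ : ρ.IsHermitian) (W : Matrix m m ℂ) :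
    projT ρ W = conjStarAlgAut ℂ _ hρ.eigenvectorUnitary
      (tangentProj (diagonal fun i => if hρ.eigenvalues i ≠ 0 then 1 else 0)
        ((conjStarAlgAut ℂ _ hρ.eigenvectorUnitary).symm W)) := by
  rw [map_tangentProj, StarAlgEquiv.apply_symm_apply, projT, rangeProj, dif_pos hρ]
  simp only [ne_eq, ite_not]
  rfl

theorem frobNorm_sq_projT_le {ρ : Matrix m m ℂ} (hρ : ρ.IsHermitian) (W : Matrix m m ℂ) :
    frobNorm (projT ρ W) ^ 2 ≤ 2 * ρ.rank * ‖W‖ ^ 2 := by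
  rw [projT_eq_conjStarAlgAut hρ, frobNorm_conjStarAlgAut]
  refine (frobNorm_sq_tangentProj_diagonal_le _ _).trans_eq ?_
  rw [hρ.rank_eq_card_non_zero_eigs, conjStarAlgAut_symm, norm_conjStarAlgAut]

end

theorem fourier_type_incoherence_general {n : ℕ}
    (w : Fin (n ^ 2) → Matrix (Fin n) (Fin n) ℂ)
    (ν : ℝ) (hν : ∀ a, opNorm (w a) ^ 2 ≤ ν / n)
    (ρ : Matrix (Fin n) (Fin n) ℂ) (hρ : ρ.IsHermitian) (r : ℕ) (hrank : ρ.rank = r) :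
    ∀ a, frobNorm (projT ρ (w a)) ^ 2 ≤ 2 * ν * r / n := by
  intro a
  calc frobNorm (projT ρ (w a)) ^ 2 ≤ 2 * r * ‖w a‖ ^ 2 := hrank ▸ frobNorm_sq_projT_le hρ (w a)
    _ ≤ 2 * r * (ν / n) := by gcongr; exact hν a
    _ = 2 * ν * r / n := by ring

/-- If `{w_a}` is an orthonormal (Hilbert–Schmidt) basis of the Hermitian `n×n` matrices
with `max_a ‖w_a‖² ≤ ν/n` and `ρ` is Hermitian of rank `r`, then
`max_a ‖𝒫_T w_a‖₂² ≤ 2νr/n`. -/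
theorem fourier_type_incoherence {n : ℕ} (hn : 0 < n)
    (w : Fin (n ^ 2) → Matrix (Fin n) (Fin n) ℂ)
    (hherm : ∀ a, (w a).IsHermitian)
    (horth : ∀ a b, Matrix.trace (w a * w b) = if a = b then 1 else 0)
    (hspan : ∀ σ : Matrix (Fin n) (Fin n) ℂ, σ.IsHermitian →
      σ = ∑ a, ((Matrix.trace (w a * σ)).re : ℝ) • w a)
    (ν : ℝ) (hν : ∀ a, opNorm (w a) ^ 2 ≤ ν / n)
    (ρ : Matrix (Fin n) (Fin n) ℂ) (hρ : ρ.IsHermitian) (r : ℕ) (hrank : ρ.rank = r) :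
    ∀ a, frobNorm (projT ρ (w a)) ^ 2 ≤ 2 * ν * r / n :=
  fourier_type_incoherence_general w ν hν ρ hρ r hrank
end

section
/- Vector Bernstein inequality: Let X₁,…,X_m be independent zero-mean random vectors in a (finite-dimensional) inner product space, V = ∑_i E[‖X_i‖²], and N = ‖∑_{i=1}^m X_i‖. Then for 0 < t ≤ V/(max ‖X_i‖), Pr[N ≥ √V + t] ≤ exp(−t²/(4V)). -/
/-!
Write `N = ‖∑ᵢ Xᵢ‖` and `Φₖ(s) = E‖s + Xₖ + ⋯ + Xₘ₋₁‖`, so that `Φₖ(X₀ + ⋯ + Xₖ₋₁)` is the Doob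
martingale of `N` and `Φₖ(s) = E Φₖ₊₁(s + Xₖ)`. Averaging a 1-Lipschitz function against a law
supported in the ball of radius `B` keeps it 1-Lipschitz, so each increment
`Φₖ₊₁(s + x) - Φₖ(s)` is bounded by `2B` and has conditional variance at most `E‖Xₖ‖²`.
With `e^w ≤ 1 + w + w²` for `|w| ≤ 1` this gives `E exp(l N) ≤ exp(l E N + l² V)` whenever
`2 l B ≤ 1`. Jensen's inequality for the square root, applied one increment at a time, gives
`E N ≤ √V`, and the Chernoff bound with `l = t / (2V)` concludes.
-/

open MeasureTheory ProbabilityTheory Real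

lemma integral_exp_le_exp_integral_sq {α : Type*} [MeasurableSpace α] {ν : Measure α}
    [IsProbabilityMeasure ν] {W : α → ℝ} (hWm : AEStronglyMeasurable W ν)
    (hW : ∀ᵐ x ∂ν, |W x| ≤ 1) (hW0 : ∫ x, W x ∂ν = 0) :
    ∫ x, exp (W x) ∂ν ≤ exp (∫ x, W x ^ 2 ∂ν) := by
  have hWi : Integrable W ν := .of_bound hWm 1 (by simpa only [Real.norm_eq_abs] using hW)
  have hW2i : Integrable (fun x => W x ^ 2) ν :=
    .of_bound (hWm.pow 2) 1 (hW.mono fun x hx => by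
      simpa only [norm_pow, Real.norm_eq_abs, one_pow] using pow_le_one₀ (abs_nonneg _) hx)
  calc ∫ x, exp (W x) ∂ν ≤ ∫ x, (1 + W x + W x ^ 2) ∂ν := by
        refine integral_mono_of_nonneg (.of_forall fun x => (exp_pos _).le)
          (((integrable_const 1).add hWi).add hW2i) ?_
        filter_upwards [hW] with x hx
        linarith [(abs_le.1 (abs_exp_sub_one_sub_id_le hx)).2]
    _ = 1 + ∫ x, W x ^ 2 ∂ν := by
        have h1i : Integrable (fun x => 1 + W x) ν := (integrable_const 1).add hWi
        rw [integral_add h1i hW2i, integral_add (integrable_const 1) hWi, hW0]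
        simp
    _ ≤ exp (∫ x, W x ^ 2 ∂ν) := by linarith [add_one_le_exp (∫ x, W x ^ 2 ∂ν)]

lemma Continuous.integrable_comp_of_ae_norm_le {Ω E F : Type*} [MeasurableSpace Ω]
    {μ : Measure Ω} [IsFiniteMeasure μ] [NormedAddCommGroup E] [ProperSpace E]
    [NormedAddCommGroup F] {g : E → F} (hg : Continuous g) {Y : Ω → E}
    (hY : AEStronglyMeasurable Y μ) {C : ℝ} (hC : ∀ᵐ ω ∂μ, ‖Y ω‖ ≤ C) :
    Integrable (fun ω => g (Y ω)) μ := by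
  obtain ⟨K, hK⟩ := (isCompact_closedBall (0 : E) C).exists_bound_of_continuousOn hg.continuousOn
  exact .of_bound (hg.comp_aestronglyMeasurable hY) K
    (hC.mono fun ω h => hK _ (mem_closedBall_zero_iff.2 h))

lemma ProbabilityTheory.IndepFun.integral_comp_eq_integral_integral {Ω α β : Type*}
    [MeasurableSpace Ω] {μ : Measure Ω} [IsFiniteMeasure μ] [MeasurableSpace α] [MeasurableSpace β]
    {Y : Ω → α} {Z : Ω → β} (hY : Measurable Y) (hZ : Measurable Z) (hYZ : IndepFun Y Z μ)
    {F : α × β → ℝ} (hF : StronglyMeasurable F) (hFi : Integrable (fun ω => F (Y ω, Z ω)) μ) :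
    ∫ ω, F (Y ω, Z ω) ∂μ = ∫ y, ∫ ω, F (y, Z ω) ∂μ ∂(μ.map Y) := by
  have hlaw := (indepFun_iff_map_prod_eq_prod_map_map hY.aemeasurable hZ.aemeasurable).1 hYZ
  have hFi' : Integrable F ((μ.map Y).prod (μ.map Z)) := by
    rwa [← hlaw, integrable_map_measure hF.aestronglyMeasurable (hY.prodMk hZ).aemeasurable]
  rw [← integral_map (hY.prodMk hZ).aemeasurable hF.aestronglyMeasurable, hlaw,
    integral_prod F hFi']
  refine integral_congr_ae (.of_forall fun y => ?_)
  exact integral_map hZ.aemeasurable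
    (hF.comp_measurable measurable_prodMk_left).aestronglyMeasurable

lemma ProbabilityTheory.iIndepFun.indepFun_zero_sum_succ {Ω β : Type*} [MeasurableSpace Ω]
    {μ : Measure Ω} [AddCommMonoid β] [MeasurableSpace β] [MeasurableAdd₂ β] {m : ℕ}
    {X : Fin (m + 1) → Ω → β} (hindep : iIndepFun X μ) (hX : ∀ i, Measurable (X i)) :
    IndepFun (X 0) (fun ω => ∑ i : Fin m, X i.succ ω) μ := by
  have h := hindep.indepFun_finsetSum_of_notMem hX (s := Finset.univ.map (Fin.succEmb m))
    (i := 0) (by simp)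
  convert h.symm using 1
  ext ω
  simp [Finset.sum_apply]

lemma ae_norm_sum_le {Ω E ι : Type*} [MeasurableSpace Ω] {μ : Measure Ω}
    [SeminormedAddCommGroup E] [Fintype ι] {X : ι → Ω → E} {B : ℝ}
    (hX : ∀ i, ∀ᵐ ω ∂μ, ‖X i ω‖ ≤ B) :
    ∀ᵐ ω ∂μ, ‖∑ i, X i ω‖ ≤ Fintype.card ι * B := by
  filter_upwards [ae_all_iff.2 hX] with ω hω
  simpa using norm_sum_le_of_le Finset.univ fun i _ => hω i

lemma ae_map_norm_le {Ω E : Type*} [MeasurableSpace Ω] {μ : Measure Ω} [NormedAddCommGroup E]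
    [MeasurableSpace E] [OpensMeasurableSpace E] {Y : Ω → E} (hY : AEMeasurable Y μ) {C : ℝ}
    (h : ∀ᵐ ω ∂μ, ‖Y ω‖ ≤ C) : ∀ᵐ x ∂(μ.map Y), ‖x‖ ≤ C :=
  (ae_map_iff hY (measurableSet_le measurable_norm measurable_const)).2 h

lemma LipschitzWith.abs_comp_add_sub_le {E : Type*} [SeminormedAddCommGroup E] {f : E → ℝ}
    (hf : LipschitzWith 1 f) (s x : E) : |f (s + x) - f s| ≤ ‖x‖ := by
  have h := hf.dist_le_mul (s + x) s
  rwa [Real.dist_eq, NNReal.coe_one, one_mul, dist_eq_norm, add_sub_cancel_left] at h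

section LipschitzAverage

variable {E : Type*} [NormedAddCommGroup E] [ProperSpace E] [MeasurableSpace E] [BorelSpace E]
  {ν : Measure E} [IsProbabilityMeasure ν] {B : ℝ} {f : E → ℝ}

lemma Continuous.integrable_comp_add (hf : Continuous f) (hν : ∀ᵐ x ∂ν, ‖x‖ ≤ B) (s : E) :
    Integrable (fun x => f (s + x)) ν :=
  (hf.comp (continuous_const_add s)).integrable_comp_of_ae_norm_le aestronglyMeasurable_id hν

lemma integrable_norm_sq_of_ae_norm_le (hν : ∀ᵐ x ∂ν, ‖x‖ ≤ B) :
    Integrable (fun x => ‖x‖ ^ 2) ν :=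
  (continuous_norm.pow 2).integrable_comp_of_ae_norm_le aestronglyMeasurable_id hν

lemma LipschitzWith.integral_comp_add {K : NNReal} (hf : LipschitzWith K f)
    (hν : ∀ᵐ x ∂ν, ‖x‖ ≤ B) : LipschitzWith K (fun s => ∫ x, f (s + x) ∂ν) := by
  refine .of_dist_le_mul fun s s' => ?_
  rw [dist_eq_norm, ← integral_sub (hf.continuous.integrable_comp_add hν s)
    (hf.continuous.integrable_comp_add hν s')]
  have hdist : ∀ x, ‖f (s + x) - f (s' + x)‖ ≤ K * dist s s' := fun x => by
    simpa [← Real.dist_eq] using hf.dist_le_mul (s + x) (s' + x)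
  simpa using norm_integral_le_of_norm_le_const (μ := ν) (.of_forall hdist)

lemma LipschitzWith.abs_integral_comp_add_sub_le (hf : LipschitzWith 1 f)
    (hν : ∀ᵐ x ∂ν, ‖x‖ ≤ B) (s : E) : |∫ x, f (s + x) ∂ν - f s| ≤ B := by
  have hsub : ∫ x, f (s + x) ∂ν - f s = ∫ x, (f (s + x) - f s) ∂ν := by
    rw [integral_sub (hf.continuous.integrable_comp_add hν s) (integrable_const _)]
    simp
  have hbd : ∀ᵐ x ∂ν, ‖f (s + x) - f s‖ ≤ B :=
    hν.mono fun x hx => (hf.abs_comp_add_sub_le s x).trans hx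
  simpa [hsub] using norm_integral_le_of_norm_le_const hbd

lemma LipschitzWith.integral_sq_comp_add_sub_integral_le (hf : LipschitzWith 1 f)
    (hν : ∀ᵐ x ∂ν, ‖x‖ ≤ B) (s : E) :
    ∫ x, (f (s + x) - ∫ y, f (s + y) ∂ν) ^ 2 ∂ν ≤ ∫ x, ‖x‖ ^ 2 ∂ν := by
  set g : E → ℝ := fun x => f (s + x) - f s
  have hg : Continuous g := (hf.continuous.comp (continuous_const_add s)).sub continuous_const
  have hcenter : ∀ x, f (s + x) - ∫ y, f (s + y) ∂ν = g x - ∫ y, g y ∂ν := fun x => by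
    rw [integral_sub (hf.continuous.integrable_comp_add hν s) (integrable_const _)]
    simp [g]
  simp_rw [hcenter]
  rw [← variance_eq_integral hg.aemeasurable]
  refine (variance_le_expectation_sq hg.aestronglyMeasurable).trans ?_
  refine integral_mono_of_nonneg (.of_forall fun x => sq_nonneg _)
    (integrable_norm_sq_of_ae_norm_le hν) (.of_forall fun x => ?_)
  simpa [sq_abs] using pow_le_pow_left₀ (abs_nonneg _) (hf.abs_comp_add_sub_le s x) 2

lemma LipschitzWith.integral_exp_mul_comp_add_le (hf : LipschitzWith 1 f)
    (hν : ∀ᵐ x ∂ν, ‖x‖ ≤ B) {l : ℝ} (hl : 0 ≤ l) (hlB : 2 * l * B ≤ 1) (s : E) :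
    ∫ x, exp (l * f (s + x)) ∂ν ≤
      exp (l * ∫ x, f (s + x) ∂ν + l ^ 2 * ∫ x, ‖x‖ ^ 2 ∂ν) := by
  set c := ∫ x, f (s + x) ∂ν
  set W : E → ℝ := fun x => l * (f (s + x) - c)
  have hfi := hf.continuous.integrable_comp_add hν s
  have hW : ∀ᵐ x ∂ν, |W x| ≤ 1 := by
    filter_upwards [hν] with x hx
    have h₁ := hf.abs_comp_add_sub_le s x
    have h₂ := hf.abs_integral_comp_add_sub_le hν s
    rw [abs_mul, abs_of_nonneg hl]
    calc l * |f (s + x) - c| ≤ l * (2 * B) := by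
          gcongr
          calc |f (s + x) - c| ≤ |f (s + x) - f s| + |f s - c| := abs_sub_le _ _ _
            _ ≤ 2 * B := by rw [abs_sub_comm (f s)]; linarith
      _ ≤ 1 := by linarith
  have hW0 : ∫ x, W x ∂ν = 0 := by
    simp only [W, integral_const_mul, integral_sub hfi (integrable_const c)]
    simp [c]
  have hW2 : ∫ x, W x ^ 2 ∂ν ≤ l ^ 2 * ∫ x, ‖x‖ ^ 2 ∂ν := by
    simp only [W, mul_pow, integral_const_mul]
    exact mul_le_mul_of_nonneg_left (hf.integral_sq_comp_add_sub_integral_le hν s) (sq_nonneg l)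
  have hWm : AEStronglyMeasurable W ν :=
    (continuous_const.mul ((hf.continuous.comp (continuous_const_add s)).sub
      continuous_const)).aestronglyMeasurable
  calc ∫ x, exp (l * f (s + x)) ∂ν = exp (l * c) * ∫ x, exp (W x) ∂ν := by
        rw [← integral_const_mul]
        congr 1 with x
        rw [← exp_add]
        simp only [W]
        ring_nf
    _ ≤ exp (l * c) * exp (l ^ 2 * ∫ x, ‖x‖ ^ 2 ∂ν) := by
        gcongr
        exact (integral_exp_le_exp_integral_sq hWm hW hW0).trans (exp_le_exp.2 hW2)
    _ = exp (l * c + l ^ 2 * ∫ x, ‖x‖ ^ 2 ∂ν) := (exp_add _ _).symm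

end LipschitzAverage

section NormPotential

variable {E : Type*} [NormedAddCommGroup E] [MeasurableSpace E]

/-- `normPotential (ν₀, …, νₘ₋₁) s = E‖s + Y₀ + ⋯ + Yₘ₋₁‖` for independent `Yᵢ ∼ νᵢ`. -/
noncomputable def normPotential : {m : ℕ} → (Fin m → Measure E) → E → ℝ
  | 0, _, s => ‖s‖
  | _ + 1, ν, s => ∫ x, normPotential (fun i => ν i.succ) (s + x) ∂(ν 0)

variable [ProperSpace E] [BorelSpace E] {B : ℝ}

lemma lipschitzWith_normPotential {m : ℕ} {ν : Fin m → Measure E}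
    [∀ i, IsProbabilityMeasure (ν i)] (hν : ∀ i, ∀ᵐ x ∂ν i, ‖x‖ ≤ B) :
    LipschitzWith 1 (normPotential ν) := by
  induction m with
  | zero => exact lipschitzWith_one_norm
  | succ m ih => exact (ih (fun i => hν i.succ)).integral_comp_add (hν 0)

variable {Ω : Type*} [MeasurableSpace Ω] {μ : Measure Ω} [IsProbabilityMeasure μ]

lemma integral_exp_mul_norm_add_add_le {Y R : Ω → E} (hY : Measurable Y) (hR : Measurable R)
    (hYR : IndepFun Y R μ) (hYB : ∀ᵐ ω ∂μ, ‖Y ω‖ ≤ B) {C : ℝ} (hRC : ∀ᵐ ω ∂μ, ‖R ω‖ ≤ C)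
    {φ : E → ℝ} (hφ : LipschitzWith 1 φ) {l c : ℝ} (hl : 0 ≤ l) (hlB : 2 * l * B ≤ 1)
    (hRφ : ∀ y, ∫ ω, exp (l * ‖y + R ω‖) ∂μ ≤ exp (l * φ y + c)) (s : E) :
    ∫ ω, exp (l * ‖s + Y ω + R ω‖) ∂μ ≤
      exp (l * ∫ x, φ (s + x) ∂(μ.map Y) + l ^ 2 * ∫ x, ‖x‖ ^ 2 ∂(μ.map Y) + c) := by
  have : IsProbabilityMeasure (μ.map Y) := Measure.isProbabilityMeasure_map hY.aemeasurable
  have hν : ∀ᵐ x ∂(μ.map Y), ‖x‖ ≤ B := ae_map_norm_le hY.aemeasurable hYB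
  have hF : Continuous fun p : E × E => exp (l * ‖s + p.1 + p.2‖) := by fun_prop
  have hFi : Integrable (fun ω => exp (l * ‖s + Y ω + R ω‖)) μ := by
    refine hF.integrable_comp_of_ae_norm_le (Y := fun ω => (Y ω, R ω))
      (hY.prodMk hR).aestronglyMeasurable (C := max B C) ?_
    filter_upwards [hYB, hRC] with ω hYω hRω
    exact norm_prod_le_iff.2 ⟨le_max_of_le_left hYω, le_max_of_le_right hRω⟩
  have hφc : Continuous fun y => exp (l * φ y + c) := by
    have := hφ.continuous
    fun_prop
  calc ∫ ω, exp (l * ‖s + Y ω + R ω‖) ∂μ = ∫ x, ∫ ω, exp (l * ‖s + x + R ω‖) ∂μ ∂(μ.map Y) :=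
        hYR.integral_comp_eq_integral_integral hY hR hF.stronglyMeasurable hFi
    _ ≤ ∫ x, exp (l * φ (s + x) + c) ∂(μ.map Y) :=
        integral_mono_of_nonneg (.of_forall fun x => integral_nonneg fun ω => (exp_pos _).le)
          (hφc.integrable_comp_add hν s) (.of_forall fun x => hRφ (s + x))
    _ = (∫ x, exp (l * φ (s + x)) ∂(μ.map Y)) * exp c := by
        simp_rw [exp_add, integral_mul_const]
    _ ≤ exp (l * ∫ x, φ (s + x) ∂(μ.map Y) + l ^ 2 * ∫ x, ‖x‖ ^ 2 ∂(μ.map Y)) * exp c := by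
        gcongr
        exact hφ.integral_exp_mul_comp_add_le hν hl hlB s
    _ = _ := (exp_add _ _).symm

theorem integral_exp_mul_norm_add_sum_le {m : ℕ} {X : Fin m → Ω → E}
    (hX : ∀ i, Measurable (X i)) (hindep : iIndepFun X μ) (hbound : ∀ i, ∀ᵐ ω ∂μ, ‖X i ω‖ ≤ B)
    {l : ℝ} (hl : 0 ≤ l) (hlB : 2 * l * B ≤ 1) (s : E) :
    ∫ ω, exp (l * ‖s + ∑ i, X i ω‖) ∂μ ≤
      exp (l * normPotential (fun i => μ.map (X i)) s +
        l ^ 2 * ∑ i, ∫ x, ‖x‖ ^ 2 ∂(μ.map (X i))) := by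
  induction m generalizing s with
  | zero => simp [normPotential]
  | succ m ih =>
    have : ∀ i, IsProbabilityMeasure (μ.map (X i)) := fun i =>
      Measure.isProbabilityMeasure_map (hX i).aemeasurable
    have hrest : LipschitzWith 1 (normPotential fun i : Fin m => μ.map (X i.succ)) :=
      lipschitzWith_normPotential fun i => ae_map_norm_le (hX _).aemeasurable (hbound _)
    have hstep := integral_exp_mul_norm_add_add_le (hX 0)
      (Finset.measurable_sum _ fun i _ => hX i.succ) (hindep.indepFun_zero_sum_succ hX)
      (hbound 0) (ae_norm_sum_le fun i : Fin m => hbound i.succ) hrest hl hlB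
      (ih (fun i => hX i.succ) (hindep.precomp (Fin.succ_injective m)) fun i => hbound i.succ) s
    simp only [Fin.sum_univ_succ, ← add_assoc, mul_add]
    exact hstep

end NormPotential

section InnerProduct

variable {E : Type*} [NormedAddCommGroup E] [InnerProductSpace ℝ E] [FiniteDimensional ℝ E]
  [MeasurableSpace E] [BorelSpace E] {ν : Measure E} [IsProbabilityMeasure ν] {B : ℝ}

lemma integral_norm_add_sq (hν : ∀ᵐ x ∂ν, ‖x‖ ≤ B) (hmean : ∫ x, x ∂ν = 0) (s : E) :
    ∫ x, ‖s + x‖ ^ 2 ∂ν = ‖s‖ ^ 2 + ∫ x, ‖x‖ ^ 2 ∂ν := by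
  have hid : Integrable (fun x : E => x) ν :=
    continuous_id.integrable_comp_of_ae_norm_le aestronglyMeasurable_id hν
  have hinner : Integrable (fun x => 2 * inner ℝ s x) ν := (hid.const_inner s).const_mul 2
  have hlin : Integrable (fun x => ‖s‖ ^ 2 + 2 * inner ℝ s x) ν := (integrable_const _).add hinner
  simp_rw [norm_add_sq_real]
  rw [integral_add hlin (integrable_norm_sq_of_ae_norm_le hν),
    integral_add (integrable_const _) hinner,
    integral_const_mul, integral_inner hid, hmean]
  simp

lemma integral_comp_add_le_sqrt (hν : ∀ᵐ x ∂ν, ‖x‖ ≤ B) (hmean : ∫ x, x ∂ν = 0) {f : E → ℝ}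
    (hf : Continuous f) {R : ℝ} (hR : 0 ≤ R) (hfR : ∀ y, f y ≤ √(‖y‖ ^ 2 + R)) (s : E) :
    ∫ x, f (s + x) ∂ν ≤ √(‖s‖ ^ 2 + (∫ x, ‖x‖ ^ 2 ∂ν + R)) := by
  have hq : Continuous fun y : E => ‖y‖ ^ 2 + R := by fun_prop
  calc ∫ x, f (s + x) ∂ν ≤ ∫ x, √(‖s + x‖ ^ 2 + R) ∂ν :=
        integral_mono (hf.integrable_comp_add hν s)
          ((continuous_sqrt.comp hq).integrable_comp_add hν s) fun x => hfR (s + x)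
    _ ≤ √(∫ x, (‖s + x‖ ^ 2 + R) ∂ν) :=
        strictConcaveOn_sqrt.concaveOn.le_map_integral continuous_sqrt.continuousOn isClosed_Ici
          (.of_forall fun x => Set.mem_Ici.2 (by positivity)) (hq.integrable_comp_add hν s)
          ((continuous_sqrt.comp hq).integrable_comp_add hν s)
    _ = √(‖s‖ ^ 2 + (∫ x, ‖x‖ ^ 2 ∂ν + R)) := by
        have hsq : Integrable (fun x => ‖s + x‖ ^ 2) ν :=
          (continuous_norm.pow 2).integrable_comp_add hν s
        rw [integral_add hsq (integrable_const R),
          integral_norm_add_sq hν hmean, integral_const]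
        simp [add_assoc]

lemma normPotential_le_sqrt {m : ℕ} {ν : Fin m → Measure E} [∀ i, IsProbabilityMeasure (ν i)]
    (hν : ∀ i, ∀ᵐ x ∂ν i, ‖x‖ ≤ B) (hmean : ∀ i, ∫ x, x ∂ν i = 0) (s : E) :
    normPotential ν s ≤ √(‖s‖ ^ 2 + ∑ i, ∫ x, ‖x‖ ^ 2 ∂ν i) := by
  induction m generalizing s with
  | zero => simp [normPotential]
  | succ m ih =>
    rw [Fin.sum_univ_succ]
    exact integral_comp_add_le_sqrt (hν 0) (hmean 0)
      (lipschitzWith_normPotential fun i => hν i.succ).continuous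
      (Finset.sum_nonneg fun i _ => integral_nonneg fun x => by positivity)
      (ih (fun i => hν i.succ) (fun i => hmean i.succ)) s

end InnerProduct

lemma measure_le_add_le_exp_of_integral_exp_le {Ω : Type*} [MeasurableSpace Ω] {μ : Measure Ω}
    [IsProbabilityMeasure μ] {N : Ω → ℝ} {a V t : ℝ} (hV : 0 < V) (ht : 0 ≤ t)
    (hint : Integrable (fun ω => exp (t / (2 * V) * N ω)) μ)
    (hmgf : ∫ ω, exp (t / (2 * V) * N ω) ∂μ ≤ exp (t / (2 * V) * a + (t / (2 * V)) ^ 2 * V)) :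
    μ {ω | a + t ≤ N ω} ≤ ENNReal.ofReal (exp (-(t ^ 2) / (4 * V))) := by
  have hexponent : -(t / (2 * V)) * (a + t) + (t / (2 * V) * a + (t / (2 * V)) ^ 2 * V) =
      -(t ^ 2) / (4 * V) := by
    field_simp
    ring
  rw [← ENNReal.ofReal_toReal (measure_ne_top μ _)]
  refine ENNReal.ofReal_le_ofReal ?_
  calc μ.real {ω | a + t ≤ N ω} ≤ exp (-(t / (2 * V)) * (a + t)) * mgf N μ (t / (2 * V)) :=
        measure_ge_le_exp_mul_mgf _ (by positivity) hint
    _ ≤ exp (-(t / (2 * V)) * (a + t)) * exp (t / (2 * V) * a + (t / (2 * V)) ^ 2 * V) := by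
        gcongr
        exact hmgf
    _ = exp (-(t ^ 2) / (4 * V)) := by rw [← exp_add, hexponent]

theorem vector_bernstein_general {E : Type*} [NormedAddCommGroup E] [InnerProductSpace ℝ E]
    [FiniteDimensional ℝ E] [MeasurableSpace E] [BorelSpace E]
    {Ω : Type*} [MeasurableSpace Ω] (μ : Measure Ω) [IsProbabilityMeasure μ]
    {m : ℕ} (X : Fin m → Ω → E)
    (hmeas : ∀ i, Measurable (X i))
    (hindep : iIndepFun X μ)
    (hmean : ∀ i, ∫ ω, X i ω ∂μ = 0)
    (B : ℝ) (hbound : ∀ i, ∀ᵐ ω ∂μ, ‖X i ω‖ ≤ B)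
    (V : ℝ) (hV : V = ∑ i, ∫ ω, ‖X i ω‖ ^ 2 ∂μ)
    (t : ℝ) (ht : 0 < t) (ht2 : t ≤ V / B) :
    μ {ω | Real.sqrt V + t ≤ ‖∑ i, X i ω‖} ≤
      ENNReal.ofReal (Real.exp (-(t ^ 2) / (4 * V))) := by
  have : ∀ i, IsProbabilityMeasure (μ.map (X i)) := fun i =>
    Measure.isProbabilityMeasure_map (hmeas i).aemeasurable
  have hV' : V = ∑ i, ∫ x, ‖x‖ ^ 2 ∂(μ.map (X i)) := by
    rw [hV]
    refine Finset.sum_congr rfl fun i _ => (integral_map (f := fun x : E => ‖x‖ ^ 2)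
      (hmeas i).aemeasurable ?_).symm
    exact (by fun_prop : Continuous fun y : E => ‖y‖ ^ 2).aestronglyMeasurable
  obtain ⟨hVpos, hBpos⟩ : 0 < V ∧ 0 < B := by
    have hV0 : 0 ≤ V := hV ▸ Finset.sum_nonneg fun i _ => integral_nonneg fun ω => by positivity
    exact (div_pos_iff.1 (ht.trans_le ht2)).resolve_right fun h => h.1.not_ge hV0
  have hpot : normPotential (fun i => μ.map (X i)) 0 ≤ √V := by
    simpa [← hV'] using normPotential_le_sqrt
      (fun i => ae_map_norm_le (hmeas i).aemeasurable (hbound i))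
      (fun i => (integral_map (hmeas i).aemeasurable aestronglyMeasurable_id).trans (hmean i)) 0
  have hlB : 2 * (t / (2 * V)) * B ≤ 1 := by
    rw [le_div_iff₀ hBpos] at ht2
    calc 2 * (t / (2 * V)) * B = t * B / V := by field_simp
      _ ≤ 1 := (div_le_one hVpos).2 ht2
  have hmgf := integral_exp_mul_norm_add_sum_le hmeas hindep hbound (by positivity) hlB 0
  simp only [zero_add, ← hV'] at hmgf
  refine measure_le_add_le_exp_of_integral_exp_le hVpos ht.le ?_ (hmgf.trans (by gcongr))
  have hexp : Continuous fun y : E => exp (t / (2 * V) * ‖y‖) := by fun_prop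
  exact hexp.integrable_comp_of_ae_norm_le
    (Finset.measurable_sum _ fun i _ => hmeas i).aestronglyMeasurable (ae_norm_sum_le hbound)

/-- **Vector Bernstein inequality.**  Let `X₁,…,X_m` be independent zero-mean random
vectors in a finite-dimensional inner product space, `V = ∑ᵢ E[‖Xᵢ‖²]`,
`N = ‖∑ᵢ Xᵢ‖`.  Then for `0 < t ≤ V/(max ‖Xᵢ‖)`,
`Pr[N ≥ √V + t] ≤ exp(−t²/(4V))`. -/
theorem vector_bernstein {E : Type*} [NormedAddCommGroup E] [InnerProductSpace ℝ E]
    [FiniteDimensional ℝ E] [MeasurableSpace E] [BorelSpace E]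
    {Ω : Type*} [MeasurableSpace Ω] (μ : Measure Ω) [IsProbabilityMeasure μ]
    {m : ℕ} (X : Fin m → Ω → E)
    (hmeas : ∀ i, Measurable (X i))
    (hindep : iIndepFun X μ)
    (hmean : ∀ i, ∫ ω, X i ω ∂μ = 0)
    (B : ℝ) (hB : 0 < B) (hbound : ∀ i, ∀ᵐ ω ∂μ, ‖X i ω‖ ≤ B)
    (V : ℝ) (hV : V = ∑ i, ∫ ω, ‖X i ω‖ ^ 2 ∂μ)
    (t : ℝ) (ht : 0 < t) (ht2 : t ≤ V / B) :
    μ {ω | Real.sqrt V + t ≤ ‖∑ i, X i ω‖} ≤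
      ENNReal.ofReal (Real.exp (-(t ^ 2) / (4 * V))) :=
  vector_bernstein_general μ X hmeas hindep hmean B hbound V hV t ht ht2
end

section
/- Lower bound for Pauli-basis matrix recovery: Let n = 2^k and let {w_a}_{a=1}^{n²} be the (normalized) Pauli basis on ℂ^n. If Ω ⊆ [1,n²] has |Ω| < (n−2)·log₂ n, then there exist two rank-one orthogonal projections P₁, P₂ with orthogonal ranges (P₁P₂ = 0) such that tr(w_a P₁) = tr(w_a P₂) for all a ∈ Ω. -/
/-!
For a symmetric `A` over `𝔽₂`, the stabilizer state `ψ_A(v) = 2^{-k/2} i^{vᵀAv}` satisfies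
`⟨ψ_A, w(p,q) ψ_A⟩ = 0` unless `p = A q`, because `vᵀAv` (taken mod 4) is a quadratic
refinement of the bilinear form `vᵀAq`. Conjugating by the diagonal Pauli `w(d,0)` multiplies
`w(p,q)` by `(-1)^{d·q}`, so `ψ_A` and `w(d,0) ψ_A` are orthogonal for `d ≠ 0` and have the
same coefficients on every `w(Aq,q)` with `d·q = 0`. The matrices `A_x = (Tr(x bᵢ bⱼ))` for
`x ∈ 𝔽_{2^k}` give `2^k` such stabilizer groups with pairwise trivial intersections, so one of
them contains fewer than `k` non-identity elements of `Ω`, and `d` can be taken orthogonal to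
all of them.
-/

open Matrix

/-- The Pauli matrix `σ₁`. -/
def pauliX : Matrix (Fin 2) (Fin 2) ℂ := !![0, 1; 1, 0]

/-- The Pauli matrix `σ₃`. -/
def pauliZ : Matrix (Fin 2) (Fin 2) ℂ := !![1, 0; 0, -1]

/-- The single-qubit Pauli operator `i^{pq} σ₃^p σ₁^q`. -/
noncomputable def pauliFactor (p q : ZMod 2) : Matrix (Fin 2) (Fin 2) ℂ :=
  (Complex.I ^ (p.val * q.val)) • (pauliZ ^ p.val * pauliX ^ q.val)

/-- The Pauli operator `w(p,q) = ⊗_j i^{p_j q_j} σ₃^{p_j} σ₁^{q_j}` on `(ℂ²)^{⊗k}`,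
realized as a matrix indexed by `Fin k → Fin 2`. -/
noncomputable def pauli {k : ℕ} (p q : Fin k → ZMod 2) :
    Matrix (Fin k → Fin 2) (Fin k → Fin 2) ℂ :=
  Matrix.of fun x y => ∏ j, pauliFactor (p j) (q j) (x j) (y j)

open Complex Finset Matrix

lemma AddChar.map_sum_eq_prod {A M ι : Type*} [AddCommMonoid A] [CommMonoid M]
    (ψ : AddChar A M) (s : Finset ι) (f : ι → A) :
    ψ (∑ i ∈ s, f i) = ∏ i ∈ s, ψ (f i) :=
  map_prod ψ.toMonoidHom (fun i => Multiplicative.ofAdd (f i)) s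

lemma Complex.star_inv_sqrt_mul_inv_sqrt {a : ℝ} (ha : 0 ≤ a) :
    star ((Real.sqrt a : ℂ)⁻¹) * (Real.sqrt a : ℂ)⁻¹ = (a : ℂ)⁻¹ := by
  rw [RCLike.star_def, map_inv₀, conj_ofReal, ← mul_inv, ← ofReal_mul, Real.mul_self_sqrt ha]

lemma Finset.exists_card_filter_lt_of_card_lt_mul {α β : Type*} [Fintype β] {s : Finset α}
    {r : β → α → Prop} [∀ b, DecidablePred (r b)]
    (hr : ∀ a ∈ s, ∀ b₁ b₂, r b₁ a → r b₂ a → b₁ = b₂) {n : ℕ}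
    (hs : #s < Fintype.card β * n) : ∃ b, #{a ∈ s | r b a} < n := by
  classical
  by_contra! h
  have hdisj : ((univ : Finset β) : Set β).PairwiseDisjoint fun b => {a ∈ s | r b a} := by
    intro b₁ _ b₂ _ hb
    refine disjoint_left.2 fun a ha₁ ha₂ => hb ?_
    exact hr a (mem_filter.1 ha₁).1 b₁ b₂ (mem_filter.1 ha₁).2 (mem_filter.1 ha₂).2
  have : Fintype.card β * n ≤ #s := calc
    Fintype.card β * n = ∑ _b : β, n := by simp
    _ ≤ ∑ b, #{a ∈ s | r b a} := sum_le_sum fun b _ => h b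
    _ = #(univ.biUnion fun b => {a ∈ s | r b a}) := (card_biUnion hdisj).symm
    _ ≤ #s := card_le_card (biUnion_subset.2 fun b _ => filter_subset _ _)
  omega

namespace Matrix

lemma IsSymm.dotProduct_mulVec_comm {n R : Type*} [Fintype n] [CommSemiring R]
    {A : Matrix n n R} (hA : A.IsSymm) (u v : n → R) : u ⬝ᵥ A *ᵥ v = v ⬝ᵥ A *ᵥ u := by
  rw [dotProduct_mulVec, ← mulVec_transpose, hA.eq, dotProduct_comm]

lemma exists_ne_zero_forall_dotProduct_eq_zero {K n : Type*} [Field K] [Fintype n]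
    (S : Finset (n → K)) (hS : #S < Fintype.card n) :
    ∃ d ≠ 0, ∀ q ∈ S, q ⬝ᵥ d = 0 := by
  let M : Matrix S n K := of fun s => s.1
  have hker : LinearMap.ker M.mulVecLin ≠ ⊥ :=
    LinearMap.ker_ne_bot_of_finrank_lt (by simpa using hS)
  obtain ⟨d, hd, hd0⟩ := Submodule.ne_bot_iff _ |>.1 hker
  exact ⟨d, hd0, fun q hq => congrFun (LinearMap.mem_ker.1 hd) ⟨q, hq⟩⟩

section RankOne

variable {R n : Type*} [CommSemiring R] [StarRing R]

lemma conjTranspose_vecMulVec_star (u : n → R) :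
    (vecMulVec u (star u))ᴴ = vecMulVec u (star u) := by
  rw [conjTranspose_vecMulVec, star_star]

variable [Fintype n]

lemma vecMulVec_star_mul_vecMulVec_star (u v : n → R) :
    vecMulVec u (star u) * vecMulVec v (star v) = (star u ⬝ᵥ v) • vecMulVec u (star v) := by
  rw [vecMulVec_mul_vecMulVec, vecMulVec_smul]

lemma vecMulVec_star_mul_self {u : n → R} (hu : star u ⬝ᵥ u = 1) :
    vecMulVec u (star u) * vecMulVec u (star u) = vecMulVec u (star u) := by
  rw [vecMulVec_star_mul_vecMulVec_star, hu, one_smul]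

lemma vecMulVec_star_mul_eq_zero {u v : n → R} (huv : star u ⬝ᵥ v = 0) :
    vecMulVec u (star u) * vecMulVec v (star v) = 0 := by
  rw [vecMulVec_star_mul_vecMulVec_star, huv, zero_smul]

lemma trace_mul_vecMulVec_star (M : Matrix n n R) (u : n → R) :
    trace (M * vecMulVec u (star u)) = star u ⬝ᵥ M *ᵥ u := by
  rw [mul_vecMulVec, trace_vecMulVec, dotProduct_comm]

lemma star_mulVec_dotProduct_mulVec_mulVec (U M : Matrix n n R) (u : n → R) :
    star (U *ᵥ u) ⬝ᵥ M *ᵥ U *ᵥ u = star u ⬝ᵥ (Uᴴ * M * U) *ᵥ u := by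
  rw [star_mulVec, ← dotProduct_mulVec, mulVec_mulVec, mulVec_mulVec, Matrix.mul_assoc]

lemma rank_vecMulVec_star {K : Type*} [Field K] [StarRing K] {u : n → K}
    (hu : star u ⬝ᵥ u = 1) : (vecMulVec u (star u)).rank = 1 := by
  refine le_antisymm (rank_vecMulVec_le _ _) (Nat.one_le_iff_ne_zero.2 fun h => ?_)
  have hu0 : u ≠ 0 := by rintro rfl; simp at hu
  have hmem : u ∈ LinearMap.range (vecMulVec u (star u)).mulVecLin :=
    ⟨u, by simp [vecMulVec_mulVec, hu]⟩
  rw [rank, Submodule.finrank_eq_zero] at h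
  exact hu0 (by simpa [h] using hmem)

end RankOne

end Matrix

section TraceForm

variable {K L ι : Type*} [Field K] [Field L] [Algebra K L]

noncomputable def traceFormMatrix (b : Module.Basis ι K L) (x : L) : Matrix ι ι K :=
  of fun i j => Algebra.trace K L (x * b i * b j)

lemma traceFormMatrix_isSymm (b : Module.Basis ι K L) (x : L) :
    (traceFormMatrix b x).IsSymm := by
  ext i j
  simp only [traceFormMatrix, transpose_apply, of_apply, mul_right_comm]

lemma traceFormMatrix_sub (b : Module.Basis ι K L) (x y : L) :
    traceFormMatrix b x - traceFormMatrix b y = traceFormMatrix b (x - y) := by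
  ext i j
  simp [traceFormMatrix, sub_mul]

lemma det_traceFormMatrix_ne_zero [Fintype ι] [DecidableEq ι] [FiniteDimensional K L]
    [Algebra.IsSeparable K L] (b : Module.Basis ι K L) {x : L} (hx : x ≠ 0) :
    (traceFormMatrix b x).det ≠ 0 := by
  have : traceFormMatrix b x =
      LinearMap.BilinForm.toMatrix b ((Algebra.traceForm K L).compLeft (Algebra.lmul K L x)) := by
    ext i j
    simp [traceFormMatrix, LinearMap.BilinForm.toMatrix_apply, mul_assoc]
  rw [this, ← LinearMap.BilinForm.nondegenerate_iff_det_ne_zero]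
  refine .ofSeparatingLeft fun y hy => ?_
  have hxy : x * y = 0 := (traceForm_nondegenerate K L).1 (x * y) fun z => by
    simpa [mul_assoc] using hy z
  exact (mul_eq_zero.1 hxy).resolve_left hx

end TraceForm

lemma exists_isSymm_det_sub_ne_zero {k : ℕ} (hk : k ≠ 0) :
    ∃ A : Fin (2 ^ k) → Matrix (Fin k) (Fin k) (ZMod 2),
      (∀ x, (A x).IsSymm) ∧ Pairwise fun x y => (A x - A y).det ≠ 0 := by
  let F := GaloisField 2 k
  have : Fintype F := Fintype.ofFinite F
  have e : Fin (2 ^ k) ≃ F :=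
    (Fintype.equivFinOfCardEq (by rw [← Nat.card_eq_fintype_card, GaloisField.card 2 k hk])).symm
  let b := Module.finBasisOfFinrankEq (ZMod 2) F (GaloisField.finrank 2 hk)
  refine ⟨fun x => traceFormMatrix b (e x), fun x => traceFormMatrix_isSymm b _,
    fun x y hxy => ?_⟩
  dsimp only
  rw [traceFormMatrix_sub]
  exact det_traceFormMatrix_ne_zero b (sub_ne_zero.2 (e.injective.ne hxy))

namespace PauliRecovery

def iPowChar : AddChar (ZMod 4) ℂ where
  toFun a := I ^ a.val
  map_zero_eq_one' := by simp
  map_add_eq_mul' a b := by rw [ZMod.val_add, ← I_pow_eq_pow_mod, pow_add]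

def doubling : ZMod 2 →+ ZMod 4 where
  toFun a := 2 * a.cast
  map_zero' := by decide
  map_add' := by decide

def signChar : AddChar (ZMod 2) ℂ := iPowChar.compAddMonoidHom doubling

lemma signChar_one : signChar 1 = -1 := by
  change I ^ (2 : ZMod 4).val = -1
  rw [show (2 : ZMod 4).val = 2 from rfl, I_sq]

lemma star_signChar (a : ZMod 2) : star (signChar a) = signChar a := by
  rw [RCLike.star_def, ← AddChar.map_neg_eq_conj, ZMod.neg_eq_self_mod_two]

lemma signChar_mul_self (a : ZMod 2) : signChar a * signChar a = 1 := by
  rw [← AddChar.map_add_eq_mul, CharTwo.add_self_eq_zero, AddChar.map_zero_eq_one]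

lemma star_iPowChar_mul_self (t : ZMod 4) : star (iPowChar t) * iPowChar t = 1 := by
  rw [RCLike.star_def, ← AddChar.map_neg_eq_conj, ← AddChar.map_add_eq_mul, neg_add_cancel,
    AddChar.map_zero_eq_one]

lemma iPowChar_two_mul (t : ZMod 4) :
    iPowChar (2 * t) = signChar (ZMod.castHom (by norm_num) (ZMod 2) t) := by
  have key : ∀ t : ZMod 4, 2 * t = doubling (ZMod.castHom (by norm_num) (ZMod 2) t) := by
    decide
  rw [key]
  rfl

lemma sum_signChar_dotProduct {ι : Type*} [Fintype ι] [DecidableEq ι] (w : ι → ZMod 2) :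
    ∑ v, signChar (w ⬝ᵥ v) = if w = 0 then 2 ^ Fintype.card ι else 0 := by
  split_ifs with hw
  · simp [hw]
  obtain ⟨j, hj⟩ := Function.ne_iff.1 hw
  have hwj : w j = 1 := (by decide : ∀ a : ZMod 2, a ≠ 0 → a = 1) _ hj
  let ψ : AddChar (ι → ZMod 2) ℂ :=
    signChar.compAddMonoidHom (AddMonoidHom.mk' (w ⬝ᵥ ·) (dotProduct_add w))
  change ∑ v, ψ v = 0
  rw [AddChar.sum_eq_zero_iff_ne_zero, AddChar.ne_zero_iff]
  exact ⟨Pi.single j 1, by simp [ψ, hwj, signChar_one]; norm_num⟩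

section QuadForm

variable {ι : Type*}

lemma cast_comp_add (z q : ι → ZMod 2) :
    (ZMod.cast ∘ (z + q) : ι → ZMod 4) =
      ZMod.cast ∘ z + ZMod.cast ∘ q + (2 : ZMod 4) • (ZMod.cast ∘ z * ZMod.cast ∘ q) := by
  have key : ∀ a b : ZMod 2,
      ((a + b).cast : ZMod 4) = a.cast + b.cast + 2 * (a.cast * b.cast) := by decide
  ext j
  exact key (z j) (q j)

variable [Fintype ι]

def quadForm (A : Matrix ι ι (ZMod 2)) (z : ι → ZMod 2) : ZMod 4 :=
  (ZMod.cast ∘ z) ⬝ᵥ A.map ZMod.cast *ᵥ (ZMod.cast ∘ z)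

lemma quadForm_add {A : Matrix ι ι (ZMod 2)} (hA : A.IsSymm) (z q : ι → ZMod 2) :
    quadForm A (z + q) = quadForm A z + quadForm A q +
      2 * ((ZMod.cast ∘ z) ⬝ᵥ A.map ZMod.cast *ᵥ (ZMod.cast ∘ q)) := by
  have hA' : (A.map (ZMod.cast : ZMod 2 → ZMod 4)).IsSymm := hA.map _
  have h4 : (4 : ZMod 4) = 0 := rfl
  set u : ι → ZMod 4 := ZMod.cast ∘ z
  set v : ι → ZMod 4 := ZMod.cast ∘ q
  set w := u * v
  simp only [quadForm, cast_comp_add, add_dotProduct, dotProduct_add, mulVec_add, mulVec_smul,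
    smul_dotProduct, dotProduct_smul, smul_eq_mul]
  rw [hA'.dotProduct_mulVec_comm v u, hA'.dotProduct_mulVec_comm w u,
    hA'.dotProduct_mulVec_comm w v]
  linear_combination (u ⬝ᵥ A.map ZMod.cast *ᵥ w + v ⬝ᵥ A.map ZMod.cast *ᵥ w +
    w ⬝ᵥ A.map ZMod.cast *ᵥ w) * h4

lemma iPowChar_quadForm_add {A : Matrix ι ι (ZMod 2)} (hA : A.IsSymm) (z q : ι → ZMod 2) :
    iPowChar (quadForm A (z + q)) =
      iPowChar (quadForm A z) * iPowChar (quadForm A q) * signChar (z ⬝ᵥ A *ᵥ q) := by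
  set r := ZMod.castHom (show 2 ∣ 4 by norm_num) (ZMod 2)
  have hr : r ∘ ZMod.cast = id := funext (by decide : ∀ a : ZMod 2, r a.cast = a)
  have hA' : (A.map ZMod.cast).map r = A := by rw [Matrix.map_map, hr, Matrix.map_id]
  have hred : r ∘ (A.map ZMod.cast *ᵥ ZMod.cast ∘ q) = A *ᵥ q := by
    ext i
    rw [Function.comp_apply, RingHom.map_mulVec, hA', ← Function.comp_assoc, hr]
    rfl
  rw [quadForm_add hA, AddChar.map_add_eq_mul, AddChar.map_add_eq_mul, iPowChar_two_mul,
    RingHom.map_dotProduct, ← Function.comp_assoc, hr, hred]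
  rfl

end QuadForm

variable {k : ℕ}

def bits : (Fin k → Fin 2) ≃ (Fin k → ZMod 2) :=
  Equiv.piCongrRight fun _ => (ZMod.finEquiv 2).toEquiv

def pauliPhase (p q : Fin k → ZMod 2) : ℂ := ∏ j, I ^ ((p j).val * (q j).val)

lemma pauliFactor_apply (p q : ZMod 2) (x y : Fin 2) :
    pauliFactor p q x y = I ^ (p.val * q.val) * signChar (p * ZMod.finEquiv 2 x) *
      if ZMod.finEquiv 2 y = ZMod.finEquiv 2 x + q then 1 else 0 := by
  have h1 : ZMod.val (1 : ZMod 2) = 1 := rfl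
  have h2 : (1 + 1 : ZMod 2) = 0 := rfl
  obtain rfl | rfl : p = 0 ∨ p = 1 := by decide +revert
  all_goals obtain rfl | rfl : q = 0 ∨ q = 1 := by decide +revert
  all_goals fin_cases x <;> fin_cases y <;>
    simp [pauliFactor, pauliZ, pauliX, signChar_one, h1, h2]

lemma pauli_apply (p q : Fin k → ZMod 2) (x y : Fin k → Fin 2) :
    pauli p q x y = pauliPhase p q * signChar (p ⬝ᵥ bits x) *
      if bits y = bits x + q then 1 else 0 := by
  simp only [pauli, of_apply, pauliFactor_apply, prod_mul_distrib, prod_boole, dotProduct,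
    AddChar.map_sum_eq_prod, funext_iff, mem_univ, true_implies, pauliPhase]
  rfl

lemma pauli_mulVec (p q : Fin k → ZMod 2) (φ : (Fin k → ZMod 2) → ℂ) :
    pauli p q *ᵥ (φ ∘ bits) =
      fun x => pauliPhase p q * signChar (p ⬝ᵥ bits x) * φ (bits x + q) := by
  ext x
  rw [mulVec, dotProduct]
  simp only [pauli_apply, Function.comp_apply, mul_ite, mul_one, mul_zero, ite_mul, zero_mul]
  rw [bits.sum_comp fun v =>
    if v = bits x + q then pauliPhase p q * signChar (p ⬝ᵥ bits x) * φ v else 0]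
  simp

lemma pauli_zero_right (d : Fin k → ZMod 2) :
    pauli d 0 = diagonal fun x => signChar (d ⬝ᵥ bits x) := by
  ext x y
  simp [pauli_apply, diagonal_apply, pauliPhase, bits.injective.eq_iff, eq_comm]

lemma pauli_zero_zero : pauli 0 0 = (1 : Matrix (Fin k → Fin 2) (Fin k → Fin 2) ℂ) := by
  simp [pauli_zero_right]

lemma conjTranspose_pauli_zero_mul_mul (d p q : Fin k → ZMod 2) :
    (pauli d 0)ᴴ * pauli p q * pauli d 0 = signChar (d ⬝ᵥ q) • pauli p q := by
  ext x y
  rw [pauli_zero_right, diagonal_conjTranspose, mul_diagonal, diagonal_mul, Matrix.smul_apply,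
    pauli_apply]
  split_ifs with h
  · rw [h, dotProduct_add, AddChar.map_add_eq_mul, Pi.star_apply, star_signChar]
    linear_combination (pauliPhase p q * signChar (p ⬝ᵥ bits x) * signChar (d ⬝ᵥ q)) *
      signChar_mul_self (d ⬝ᵥ bits x)
  · simp

lemma conjTranspose_pauli_zero_mul_self (d : Fin k → ZMod 2) :
    (pauli d 0)ᴴ * pauli d 0 = 1 := by
  simpa [pauli_zero_zero] using conjTranspose_pauli_zero_mul_mul d 0 0

lemma star_pauli_zero_mulVec_dotProduct_self (d : Fin k → ZMod 2)
    (u : (Fin k → Fin 2) → ℂ) :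
    star (pauli d 0 *ᵥ u) ⬝ᵥ pauli d 0 *ᵥ u = star u ⬝ᵥ u := by
  have := star_mulVec_dotProduct_mulVec_mulVec (pauli d 0) 1 u
  rwa [one_mulVec, Matrix.mul_one, conjTranspose_pauli_zero_mul_self, one_mulVec] at this

/-- The joint eigenvector of the stabilizer group `{w(A q, q)}`. -/
noncomputable def stabilizerState (A : Matrix (Fin k) (Fin k) (ZMod 2)) :
    (Fin k → Fin 2) → ℂ :=
  (fun v => (Real.sqrt (2 ^ k) : ℂ)⁻¹ * iPowChar (quadForm A v)) ∘ bits

lemma star_stabilizerState_dotProduct_pauli_mulVec {A : Matrix (Fin k) (Fin k) (ZMod 2)}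
    (hA : A.IsSymm) (p q : Fin k → ZMod 2) :
    star (stabilizerState A) ⬝ᵥ pauli p q *ᵥ stabilizerState A =
      if p = A *ᵥ q then pauliPhase p q * iPowChar (quadForm A q) else 0 := by
  have hc := star_inv_sqrt_mul_inv_sqrt (a := 2 ^ k) (by positivity)
  push_cast at hc
  set c : ℂ := (Real.sqrt (2 ^ k) : ℂ)⁻¹
  have hterm : ∀ v, star (c * iPowChar (quadForm A v)) *
      (pauliPhase p q * signChar (p ⬝ᵥ v) * (c * iPowChar (quadForm A (v + q)))) =
      ((2 : ℂ) ^ k)⁻¹ * pauliPhase p q * iPowChar (quadForm A q) *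
        signChar ((p + A *ᵥ q) ⬝ᵥ v) := by
    intro v
    rw [iPowChar_quadForm_add hA, add_dotProduct, AddChar.map_add_eq_mul,
      dotProduct_comm (A *ᵥ q), star_mul', ← hc]
    linear_combination (star c * c * pauliPhase p q * iPowChar (quadForm A q) *
      signChar (p ⬝ᵥ v) * signChar (v ⬝ᵥ A *ᵥ q)) * star_iPowChar_mul_self (quadForm A v)
  rw [stabilizerState, pauli_mulVec, dotProduct]
  simp only [Pi.star_apply, Function.comp_apply]
  rw [bits.sum_comp fun v => star (c * iPowChar (quadForm A v)) *
    (pauliPhase p q * signChar (p ⬝ᵥ v) * (c * iPowChar (quadForm A (v + q))))]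
  simp only [hterm]
  rw [← mul_sum, sum_signChar_dotProduct, Fintype.card_fin]
  have hneg : -(A *ᵥ q) = A *ᵥ q := funext fun i => ZMod.neg_eq_self_mod_two _
  simp only [add_eq_zero_iff_eq_neg, hneg]
  split_ifs
  · field_simp
  · simp

lemma star_stabilizerState_dotProduct_self {A : Matrix (Fin k) (Fin k) (ZMod 2)}
    (hA : A.IsSymm) : star (stabilizerState A) ⬝ᵥ stabilizerState A = 1 := by
  simpa [pauli_zero_zero, pauliPhase, quadForm] using
    star_stabilizerState_dotProduct_pauli_mulVec hA 0 0

lemma star_pauli_zero_mulVec_stabilizerState_dotProduct {A : Matrix (Fin k) (Fin k) (ZMod 2)}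
    (hA : A.IsSymm) (d p q : Fin k → ZMod 2) (h : p = A *ᵥ q → d ⬝ᵥ q = 0) :
    star (pauli d 0 *ᵥ stabilizerState A) ⬝ᵥ pauli p q *ᵥ pauli d 0 *ᵥ stabilizerState A =
      star (stabilizerState A) ⬝ᵥ pauli p q *ᵥ stabilizerState A := by
  rw [star_mulVec_dotProduct_mulVec_mulVec, conjTranspose_pauli_zero_mul_mul, smul_mulVec,
    dotProduct_smul, smul_eq_mul, star_stabilizerState_dotProduct_pauli_mulVec hA]
  split_ifs with hp
  · rw [h hp, AddChar.map_zero_eq_one, one_mul]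
  · rw [mul_zero]

end PauliRecovery

open PauliRecovery

theorem pauli_recovery_lower_bound_general {k : ℕ}
    (Ω : Finset ((Fin k → ZMod 2) × (Fin k → ZMod 2)))
    (hΩ : Ω.card < (2 ^ k - 2) * k) :
    ∃ P₁ P₂ : Matrix (Fin k → Fin 2) (Fin k → Fin 2) ℂ,
      P₁ᴴ = P₁ ∧ P₂ᴴ = P₂ ∧
      P₁ * P₁ = P₁ ∧ P₂ * P₂ = P₂ ∧
      P₁.rank = 1 ∧ P₂.rank = 1 ∧
      P₁ * P₂ = 0 ∧
      ∀ a ∈ Ω,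
        Matrix.trace (((Real.sqrt (2 ^ k) : ℂ))⁻¹ • pauli a.1 a.2 * P₁) =
          Matrix.trace (((Real.sqrt (2 ^ k) : ℂ))⁻¹ • pauli a.1 a.2 * P₂) := by
  have hk : k ≠ 0 := by rintro rfl; simp at hΩ
  obtain ⟨A, hA, hdet⟩ := exists_isSymm_det_sub_ne_zero hk
  let meets x (a : (Fin k → ZMod 2) × (Fin k → ZMod 2)) := a.2 ≠ 0 ∧ a.1 = A x *ᵥ a.2
  have hmeets : ∀ a ∈ Ω, ∀ x y, meets x a → meets y a → x = y := by
    rintro a - x y ⟨hq, hx⟩ ⟨-, hy⟩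
    by_contra hxy
    exact hq (eq_zero_of_mulVec_eq_zero (hdet hxy) (by rw [sub_mulVec, ← hx, ← hy, sub_self]))
  obtain ⟨x, hx⟩ := exists_card_filter_lt_of_card_lt_mul hmeets
    (hΩ.trans_le (by simpa using Nat.mul_le_mul_right k (Nat.sub_le (2 ^ k) 2)))
  obtain ⟨d, hd, hdq⟩ := exists_ne_zero_forall_dotProduct_eq_zero
    ({a ∈ Ω | meets x a}.image Prod.snd) (card_image_le.trans_lt (by simpa using hx))
  set ψ := stabilizerState (A x)
  have hψ : star ψ ⬝ᵥ ψ = 1 := star_stabilizerState_dotProduct_self (hA x)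
  have hdψ : star (pauli d 0 *ᵥ ψ) ⬝ᵥ pauli d 0 *ᵥ ψ = 1 := by
    rw [star_pauli_zero_mulVec_dotProduct_self, hψ]
  have horth : star ψ ⬝ᵥ pauli d 0 *ᵥ ψ = 0 := by
    rw [star_stabilizerState_dotProduct_pauli_mulVec (hA x), mulVec_zero, if_neg hd]
  refine ⟨_, _, conjTranspose_vecMulVec_star ψ, conjTranspose_vecMulVec_star _,
    vecMulVec_star_mul_self hψ, vecMulVec_star_mul_self hdψ, rank_vecMulVec_star hψ,
    rank_vecMulVec_star hdψ, vecMulVec_star_mul_eq_zero horth, fun a ha => ?_⟩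
  rw [Matrix.smul_mul, trace_smul, Matrix.smul_mul, trace_smul, trace_mul_vecMulVec_star,
    trace_mul_vecMulVec_star, star_pauli_zero_mulVec_stabilizerState_dotProduct (hA x)]
  intro hp
  by_cases hq : a.2 = 0
  · rw [hq, dotProduct_zero]
  · rw [dotProduct_comm]
    exact hdq _ (mem_image_of_mem _ (mem_filter.2 ⟨ha, hq, hp⟩))

/-- **Lower bound for Pauli-basis matrix recovery.**  Let `n = 2^k` and let the normalized
Pauli basis be `n^{-1/2} w(p,q)`.  If `Ω` is a set of fewer than `(n−2)·log₂ n` basis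
indices, then there are two rank-one orthogonal projections `P₁, P₂` with orthogonal
ranges whose expansion coefficients agree on all of `Ω`. -/
theorem pauli_recovery_lower_bound {k : ℕ} (hk : 0 < k)
    (Ω : Finset ((Fin k → ZMod 2) × (Fin k → ZMod 2)))
    (hΩ : Ω.card < (2 ^ k - 2) * k) :
    ∃ P₁ P₂ : Matrix (Fin k → Fin 2) (Fin k → Fin 2) ℂ,
      P₁ᴴ = P₁ ∧ P₂ᴴ = P₂ ∧
      P₁ * P₁ = P₁ ∧ P₂ * P₂ = P₂ ∧
      P₁.rank = 1 ∧ P₂.rank = 1 ∧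
      P₁ * P₂ = 0 ∧
      ∀ a ∈ Ω,
        Matrix.trace (((Real.sqrt (2 ^ k) : ℂ))⁻¹ • pauli a.1 a.2 * P₁) =
          Matrix.trace (((Real.sqrt (2 ^ k) : ℂ))⁻¹ • pauli a.1 a.2 * P₂) :=
  pauli_recovery_lower_bound_general Ω hΩ
end

section
/- Sampling with replacement cannot outperform sampling without replacement: Let p_with(m) and p_wout(m) be the probabilities that the trace-norm minimization program min ‖σ‖₁ subject to ℛσ = ℛρ has unique solution equal to ρ, when the m basis-element indices A₁,…,A_m defining the sampling operator ℛ are drawn uniformly from [1,n²] with and without replacement respectively. Then p_with(m) ≤ p_wout(m). -/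
open Matrix
open scoped ComplexOrder

noncomputable def traceNorm {m : Type*} [Fintype m] [DecidableEq m] (A : Matrix m m ℂ) : ℝ :=
  ∑ i, Real.sqrt ((Matrix.posSemidef_conjTranspose_mul_self A).1.eigenvalues i)

/-- The sampling operator `ℛσ = (n²/m) ∑ᵢ w_{Aᵢ} (w_{Aᵢ}, σ)` determined by the sampled
indices `f : Fin m → Fin (n²)`. -/
noncomputable def samplingOp {n m : ℕ} (w : Fin (n ^ 2) → Matrix (Fin n) (Fin n) ℂ)
    (f : Fin m → Fin (n ^ 2)) (σ : Matrix (Fin n) (Fin n) ℂ) :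
    Matrix (Fin n) (Fin n) ℂ :=
  ((n ^ 2 : ℂ) / m) • ∑ i, Matrix.trace (w (f i) * σ) • w (f i)

/-- `ρ` is the unique solution of `min ‖σ‖₁ s.t. ℛσ = ℛρ` (over Hermitian matrices)
for the sample `f`. -/
def uniqueSol {n m : ℕ} (w : Fin (n ^ 2) → Matrix (Fin n) (Fin n) ℂ)
    (ρ : Matrix (Fin n) (Fin n) ℂ) (f : Fin m → Fin (n ^ 2)) : Prop :=
  ∀ σ : Matrix (Fin n) (Fin n) ℂ, σ.IsHermitian →
    samplingOp w f σ = samplingOp w f ρ → σ ≠ ρ → traceNorm ρ < traceNorm σ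

/-! Averaging over a uniform permutation `π` of the index set does not change the law of a
sample `f`, but lets one compare the two sampling schemes. Fix an embedding `e`. For every
sample `f` pick `τ_f` with `range f ⊆ τ_f '' range e`; as `π` runs over all permutations so
does `π * τ_f`, so a monotone success event for `range (π ∘ f)` has probability at most that of
the event for `π '' range e`. For an injective sample `g` one can take `τ_g • e = g`, which turns
the same computation into an equality. Recovery is such a monotone event of the set of sampled
indices because, by orthonormality, `ℛσ = ℛρ` just says `(w_a, σ) = (w_a, ρ)` for each sampled
`a`. -/

open Function Set Pointwise

section Counting

variable {G X : Type*} [Group G]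

theorem Nat.card_subtype_prod_smul [MulAction G X] (Q : X → Prop) :
    Nat.card {p : G × X // Q (p.1 • p.2)} = Nat.card {x // Q x} * Nat.card G := by
  rw [← Nat.card_prod]
  exact Nat.card_congr <|
    (Equiv.subtypeEquiv ((Equiv.prodShear (Equiv.refl G) MulAction.toPerm).trans
      (Equiv.prodComm G X)) fun _ => Iff.rfl).trans Equiv.prodSubtypeFstEquivSubtypeProd

theorem Nat.card_subtype_prod_mul (τ : X → G) (R : G → Prop) :
    Nat.card {p : G × X // R (p.1 * τ p.2)} = Nat.card {g // R g} * Nat.card X := by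
  rw [← Nat.card_prod]
  exact Nat.card_congr <|
    (Equiv.subtypeEquiv (Equiv.prodCongrLeft fun x => Equiv.mulRight (τ x)) fun _ => Iff.rfl).trans
      Equiv.prodSubtypeFstEquivSubtypeProd

end Counting

section Sampling

variable {α β : Type*} [Finite α] [Finite β]

theorem exists_injective_range_subset_range (hcard : Nat.card α ≤ Nat.card β) (f : α → β) :
    ∃ g : α → β, Injective g ∧ range f ⊆ range g := by
  obtain ⟨T, hfT, -, hT⟩ := exists_subsuperset_card_eq (subset_univ (range f))
    (Finite.card_range_le f) (by rwa [ncard_univ])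
  obtain ⟨e⟩ : Nonempty (α ≃ T) := Finite.card_eq.mp (by rw [Nat.card_coe_set_eq, hT])
  refine ⟨Subtype.val ∘ e, Subtype.val_injective.comp e.injective, ?_⟩
  rwa [range_comp, e.range_eq_univ, image_univ, Subtype.range_coe]

theorem Equiv.Perm.exists_range_subset_range_smul (e : α ↪ β) (f : α → β) :
    ∃ τ : Equiv.Perm β, range f ⊆ range ⇑(τ • e) := by
  obtain ⟨g, hg, hfg⟩ := exists_injective_range_subset_range
    (Nat.card_le_card_of_injective e e.injective) f
  obtain ⟨τ, hτ⟩ := Equiv.Perm.exists_extending_pair e g e.injective hg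
  refine ⟨τ, hfg.trans ?_⟩
  rintro _ ⟨a, rfl⟩
  exact ⟨a, hτ a⟩

theorem Monotone.card_mul_card_embedding_le {P : Set β → Prop} (hP : Monotone P) (e : α ↪ β) :
    Nat.card {f : α → β // P (range f)} * Nat.card (α ↪ β) ≤
      Nat.card {g : α ↪ β // P (range g)} * Nat.card (α → β) := by
  set c := Nat.card {π : Equiv.Perm β // P (range ⇑(π • e))}
  have with_replacement :
      Nat.card {f : α → β // P (range f)} * Nat.card (Equiv.Perm β) ≤ c * Nat.card (α → β) := by
    choose τ hτ using Equiv.Perm.exists_range_subset_range_smul e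
    calc _ = Nat.card {p : Equiv.Perm β × (α → β) // P (range (p.1 • p.2))} :=
          (Nat.card_subtype_prod_smul fun f : α → β => P (range f)).symm
      _ ≤ Nat.card {p : Equiv.Perm β × (α → β) // P (range ⇑((p.1 * τ p.2) • e))} := by
          refine Nat.card_mono (toFinite _) fun p hp => hP ?_ hp
          calc range (p.1 • p.2) = p.1 • range p.2 := range_smul p.1 p.2
            _ ⊆ p.1 • range ⇑(τ p.2 • e) := smul_set_mono (hτ p.2)
            _ = range ⇑((p.1 * τ p.2) • e) := by
              rw [mul_smul, Embedding.coe_smul]; exact (range_smul p.1 _).symm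
      _ = c * Nat.card (α → β) := Nat.card_subtype_prod_mul τ fun π => P (range ⇑(π • e))
  have without_replacement :
      Nat.card {g : α ↪ β // P (range g)} * Nat.card (Equiv.Perm β) = c * Nat.card (α ↪ β) := by
    choose τ hτ using Equiv.Perm.exists_smul_eq_embedding e
    calc _ = Nat.card {p : Equiv.Perm β × (α ↪ β) // P (range ⇑(p.1 • p.2))} :=
          (Nat.card_subtype_prod_smul fun g : α ↪ β => P (range g)).symm
      _ = Nat.card {p : Equiv.Perm β × (α ↪ β) // P (range ⇑((p.1 * τ p.2) • e))} := by
          simp_rw [mul_smul, hτ]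
      _ = c * Nat.card (α ↪ β) := Nat.card_subtype_prod_mul τ fun π => P (range ⇑(π • e))
  refine Nat.le_of_mul_le_mul_right ?_ (Nat.card_pos (α := Equiv.Perm β))
  calc _ = Nat.card {f : α → β // P (range f)} * Nat.card (Equiv.Perm β) * Nat.card (α ↪ β) := by
        ring
    _ ≤ c * Nat.card (α → β) * Nat.card (α ↪ β) := Nat.mul_le_mul_right _ with_replacement
    _ = _ := by rw [mul_right_comm, ← without_replacement]; ring

theorem Monotone.card_div_card_le_card_injective_div {P : Set β → Prop} (hP : Monotone P)
    (hcard : Nat.card α ≤ Nat.card β) :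
    (Nat.card {f : α → β // P (range f)} : ℝ) / Nat.card (α → β) ≤
      (Nat.card {f : α → β // Injective f ∧ P (range f)} : ℝ) /
        Nat.card {f : α → β // Injective f} := by
  have := Fintype.ofFinite α
  have := Fintype.ofFinite β
  obtain ⟨e⟩ := Embedding.nonempty_of_card_le (by simpa only [Nat.card_eq_fintype_card] using hcard)
  have card_injective :
      Nat.card {f : α → β // Injective f} = Nat.card (α ↪ β) :=
    Nat.card_congr (Equiv.subtypeInjectiveEquivEmbedding α β)
  have card_injective_and : Nat.card {f : α → β // Injective f ∧ P (range f)} =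
      Nat.card {g : α ↪ β // P (range g)} :=
    Nat.card_congr <| (Equiv.subtypeSubtypeEquivSubtypeInter _ _).symm.trans <|
      Equiv.subtypeEquiv (Equiv.subtypeInjectiveEquivEmbedding α β) fun _ => Iff.rfl
  have : Nonempty (α → β) := ⟨e⟩
  have : Nonempty (α ↪ β) := ⟨e⟩
  rw [card_injective, card_injective_and,
    div_le_div_iff₀ (mod_cast Nat.card_pos) (mod_cast Nat.card_pos)]
  exact_mod_cast hP.card_mul_card_embedding_le e

end Sampling

def TraceNormRecovers {ι κ : Type*} [Fintype κ] [DecidableEq κ] (w : ι → Matrix κ κ ℂ)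
    (ρ : Matrix κ κ ℂ) (S : Set ι) : Prop :=
  ∀ σ : Matrix κ κ ℂ, σ.IsHermitian →
    (∀ a ∈ S, trace (w a * σ) = trace (w a * ρ)) → σ ≠ ρ → traceNorm ρ < traceNorm σ

theorem TraceNormRecovers.monotone {ι κ : Type*} [Fintype κ] [DecidableEq κ]
    (w : ι → Matrix κ κ ℂ) (ρ : Matrix κ κ ℂ) : Monotone (TraceNormRecovers w ρ) :=
  fun _ _ hST hS σ hσ hT => hS σ hσ fun a ha => hT a (hST ha)

section Recovery

variable {n m : ℕ} {w : Fin (n ^ 2) → Matrix (Fin n) (Fin n) ℂ}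

theorem trace_mul_samplingOp (horth : ∀ a b, trace (w a * w b) = if a = b then 1 else 0)
    (f : Fin m → Fin (n ^ 2)) (σ : Matrix (Fin n) (Fin n) ℂ) (a : Fin (n ^ 2)) :
    trace (w a * samplingOp w f σ) =
      (n ^ 2 / m : ℂ) * (Finset.univ.filter fun i => f i = a).card * trace (w a * σ) := by
  rw [samplingOp, mul_smul_comm, trace_smul, smul_eq_mul, mul_assoc, Finset.card_filter,
    Nat.cast_sum, Finset.sum_mul, Matrix.mul_sum, trace_sum]
  congr 1
  refine Finset.sum_congr rfl fun i _ => ?_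
  rw [mul_smul_comm, trace_smul, horth, smul_eq_mul]
  by_cases h : f i = a
  · simp [h]
  · simp [h, Ne.symm h]

theorem samplingOp_eq_samplingOp_iff
    (horth : ∀ a b, trace (w a * w b) = if a = b then 1 else 0)
    (f : Fin m → Fin (n ^ 2)) (σ ρ : Matrix (Fin n) (Fin n) ℂ) :
    samplingOp w f σ = samplingOp w f ρ ↔ ∀ a ∈ range f, trace (w a * σ) = trace (w a * ρ) := by
  refine ⟨?_, fun h => ?_⟩
  · rintro h _ ⟨i, rfl⟩
    have hn : n ≠ 0 := by rintro rfl; exact (f i).elim0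
    have hm : m ≠ 0 := by rintro rfl; exact i.elim0
    have hi : i ∈ Finset.univ.filter fun j => f j = f i := by simp
    have := congrArg (fun M => trace (w (f i) * M)) h
    simp only [trace_mul_samplingOp horth] at this
    refine mul_left_cancel₀ ?_ this
    exact mul_ne_zero (by simp [hn, hm]) (Nat.cast_ne_zero.mpr (Finset.card_ne_zero_of_mem hi))
  · simp only [samplingOp]
    congr 2
    exact funext fun i => by rw [h (f i) ⟨i, rfl⟩]

theorem uniqueSol_iff_traceNormRecovers
    (horth : ∀ a b, trace (w a * w b) = if a = b then 1 else 0)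
    (ρ : Matrix (Fin n) (Fin n) ℂ) (f : Fin m → Fin (n ^ 2)) :
    uniqueSol w ρ f ↔ TraceNormRecovers w ρ (range f) := by
  simp only [uniqueSol, TraceNormRecovers, samplingOp_eq_samplingOp_iff horth]

end Recovery

theorem sampling_with_replacement_le_general {n m : ℕ} (hmn : m ≤ n ^ 2)
    (w : Fin (n ^ 2) → Matrix (Fin n) (Fin n) ℂ)
    (horth : ∀ a b, Matrix.trace (w a * w b) = if a = b then 1 else 0)
    (ρ : Matrix (Fin n) (Fin n) ℂ) :
    (Nat.card {f : Fin m → Fin (n ^ 2) // uniqueSol w ρ f} : ℝ) /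
        (Nat.card (Fin m → Fin (n ^ 2)) : ℝ) ≤
      (Nat.card {f : Fin m → Fin (n ^ 2) // Function.Injective f ∧ uniqueSol w ρ f} : ℝ) /
        (Nat.card {f : Fin m → Fin (n ^ 2) // Function.Injective f} : ℝ) := by
  simp_rw [uniqueSol_iff_traceNormRecovers horth]
  exact (TraceNormRecovers.monotone w ρ).card_div_card_le_card_injective_div (by simpa using hmn)

/-- **Sampling with replacement cannot outperform sampling without replacement**:
the success probability of trace-norm recovery under `m` uniform i.i.d. samples is at
most that under `m` uniform samples without replacement. -/
theorem sampling_with_replacement_le {n m : ℕ} (hm : 0 < m) (hmn : m ≤ n ^ 2)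
    (w : Fin (n ^ 2) → Matrix (Fin n) (Fin n) ℂ)
    (hherm : ∀ a, (w a).IsHermitian)
    (horth : ∀ a b, Matrix.trace (w a * w b) = if a = b then 1 else 0)
    (hspan : ∀ σ : Matrix (Fin n) (Fin n) ℂ, σ.IsHermitian →
      σ = ∑ a, ((Matrix.trace (w a * σ)).re : ℝ) • w a)
    (ρ : Matrix (Fin n) (Fin n) ℂ) (hρ : ρ.IsHermitian) :
    (Nat.card {f : Fin m → Fin (n ^ 2) // uniqueSol w ρ f} : ℝ) /
        (Nat.card (Fin m → Fin (n ^ 2)) : ℝ) ≤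
      (Nat.card {f : Fin m → Fin (n ^ 2) // Function.Injective f ∧ uniqueSol w ρ f} : ℝ) /
        (Nat.card {f : Fin m → Fin (n ^ 2) // Function.Injective f} : ℝ) :=
  sampling_with_replacement_le_general hmn w horth ρ
end
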